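/- In the Coxeter group W of type E₆, let Z be the centralizer of w₀ in W, and let u be an element of the parabolic subgroup P generated by s₁, s₃, s₄, s₅, s₆ whose length ℓ(u) is maximal among the lengths of elements of P. Then s₂ ∈ Z, u ∈ Z, and w₀ · s₂ is conjugate to u by an element of Z. -/

import Mathlib

/-!
The geometric representation of a simply-laced Coxeter group on `B → ℤ`, with simple roots
`αᵢ = Pi.single i 1`, detects descents: `ℓ (w sᵢ) > ℓ w` iff `w αᵢ ≥ 0` (Tits). Hence an element
is determined by which positive roots it makes negative, and an element of a standard parabolic
subgroup `W_J` having every `j ∈ J` as a right descent is unique, since it makes negative exactly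
the positive roots supported on `J`. Both `w₀` (with `J` everything) and `u` (with `J` everything
but `s₂`, i.e. `{1}ᶜ` in the 0-indexed `Fin 6`) have this property, so they are given by explicit
words, and the three claims become identities between products of `6 × 6` integer matrices,
which are checked by computation.
-/

open Matrix

namespace CoxeterMatrix

variable {B : Type*}

def IsSimplyLaced (M : CoxeterMatrix B) : Prop := ∀ i j, i ≠ j → M i j = 2 ∨ M i j = 3

variable [DecidableEq B]

def simplyLacedCartan (M : CoxeterMatrix B) : Matrix B B ℤ :=
  Matrix.of fun i j => if i = j then 2 else if M i j = 3 then -1 else 0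

def geometricReflection [Fintype B] (M : CoxeterMatrix B) (i : B) : Matrix B B ℤ :=
  1 - vecMulVec (Pi.single i 1) (M.simplyLacedCartan i)

end CoxeterMatrix

namespace CoxeterSystem

variable {B : Type*} {M : CoxeterMatrix B} {W : Type*} [Group W] (cs : CoxeterSystem M W)

local prefix:100 "s " => cs.simple
local prefix:100 "π " => cs.wordProd
local prefix:100 "ℓ " => cs.length

theorem simple_mul_simple_comm_of_eq_two {i j : B} (h : M i j = 2) : s i * s j = s j * s i := by
  simpa [braidWord, alternatingWord, h, M.symmetric j i, wordProd] using
    cs.wordProd_braidWord_eq i j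

theorem simple_braid_of_eq_three {i j : B} (h : M i j = 3) :
    s i * s j * s i = s j * s i * s j := by
  simpa [braidWord, alternatingWord, h, M.symmetric j i, wordProd, mul_assoc] using
    cs.wordProd_braidWord_eq j i

theorem isRightDescent_of_forall_length_le {S : Subgroup W} {x : W} (hx : x ∈ S)
    (hmax : ∀ y ∈ S, ℓ y ≤ ℓ x) {i : B} (hi : s i ∈ S) : cs.IsRightDescent x i :=
  lt_of_le_of_ne (hmax _ (mul_mem hx hi)) (cs.length_mul_simple_ne x i)

variable [DecidableEq B] [DistribMulAction W (B → ℤ)]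

variable (W) in
def roots : Set (B → ℤ) := ⋃ i, MulAction.orbit W (Pi.single i 1)

theorem single_mem_roots (i : B) : Pi.single i 1 ∈ roots W :=
  Set.mem_iUnion.mpr ⟨i, MulAction.mem_orbit_self _⟩

theorem smul_mem_roots (w : W) {β : B → ℤ} (hβ : β ∈ roots W) : w • β ∈ roots W := by
  obtain ⟨i, x, rfl⟩ := Set.mem_iUnion.mp hβ
  exact Set.mem_iUnion.mpr ⟨i, w * x, mul_smul ..⟩

theorem ne_zero_of_mem_roots {β : B → ℤ} (hβ : β ∈ roots W) : β ≠ 0 := by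
  obtain ⟨i, x, rfl⟩ := Set.mem_iUnion.mp hβ
  exact (smul_ne_zero_iff_ne x).mpr (by simp)

variable [Fintype B] in
structure IsGeometricAction : Prop where
  isSimplyLaced : M.IsSimplyLaced
  simple_smul (i : B) (v : B → ℤ) : s i • v = v - (M.simplyLacedCartan i ⬝ᵥ v) • Pi.single i 1

namespace IsGeometricAction

variable [Fintype B] {cs}

theorem simple_smul_single_self (h : cs.IsGeometricAction) (i : B) :
    s i • (Pi.single i 1 : B → ℤ) = -Pi.single i 1 := by
  rw [h.simple_smul]
  ext k
  by_cases hk : k = i <;> simp [CoxeterMatrix.simplyLacedCartan, hk]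

theorem simple_smul_single_of_eq_two (h : cs.IsGeometricAction) {i j : B} (hij : M i j = 2) :
    s j • (Pi.single i 1 : B → ℤ) = Pi.single i 1 := by
  have hne : j ≠ i := by rintro rfl; simp at hij
  rw [h.simple_smul]
  simp [CoxeterMatrix.simplyLacedCartan, hne, M.symmetric j i, hij]

theorem simple_smul_single_of_eq_three (h : cs.IsGeometricAction) {i j : B} (hij : M i j = 3) :
    s j • (Pi.single i 1 : B → ℤ) = Pi.single i 1 + Pi.single j 1 := by
  have hne : j ≠ i := by rintro rfl; simp at hij
  rw [h.simple_smul]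
  simp [CoxeterMatrix.simplyLacedCartan, hne, M.symmetric j i, hij]

theorem simple_smul_simple_smul_single_of_eq_three (h : cs.IsGeometricAction) {i j : B}
    (hij : M i j = 3) : s i • s j • (Pi.single i 1 : B → ℤ) = Pi.single j 1 := by
  rw [h.simple_smul_single_of_eq_three hij, smul_add, h.simple_smul_single_self,
    h.simple_smul_single_of_eq_three (by rwa [M.symmetric])]
  abel

theorem simple_smul_apply_of_ne (h : cs.IsGeometricAction) {i k : B} (hk : k ≠ i) (v : B → ℤ) :
    (s i • v) k = v k := by
  simp [h.simple_smul, hk]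

theorem nonneg_smul_single_of_length_lt (h : cs.IsGeometricAction) {w : W} {i : B}
    (hwi : ℓ w < ℓ (w * s i)) : 0 ≤ w • (Pi.single i 1 : B → ℤ) := by
  -- Induction along a right descent `sⱼ` of `w`: in the rank-two subgroup `⟨sᵢ, sⱼ⟩`, the vector
  -- `w αᵢ` is `v αᵢ`, `v αᵢ + v αⱼ` or `x αⱼ` for elements `v`, `x` shorter than `w`.
  induction hn : ℓ w using Nat.strong_induction_on generalizing w i with
  | _ n ih =>
  obtain rfl | hw := eq_or_ne w 1
  · simp
  obtain ⟨j, hj⟩ := cs.exists_rightDescent_of_ne_one hw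
  rw [isRightDescent_iff] at hj
  have hji : j ≠ i := by rintro rfl; omega
  set v := w * s j with hv
  have hwv : w = v * s j := (cs.simple_mul_simple_cancel_right j).symm
  have hvn : ℓ v < n := by omega
  have hvj : ℓ v < ℓ (v * s j) := by rw [← hwv]; omega
  have hwi' := cs.length_mul_simple w i
  rcases h.isSimplyLaced i j hji.symm with hij | hij
  · have hvi : ℓ v < ℓ (v * s i) := by
      have hvij : v * s i * s j = w * s i := by
        rw [hv, mul_assoc w, cs.simple_mul_simple_comm_of_eq_two (by rwa [M.symmetric]),
          mul_assoc, cs.simple_mul_simple_cancel_right]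
      have := cs.length_mul_simple (v * s i) j
      rw [hvij] at this
      omega
    rw [hwv, mul_smul, h.simple_smul_single_of_eq_two hij]
    exact ih _ hvn hvi rfl
  by_cases hvi : ℓ v < ℓ (v * s i)
  · rw [hwv, mul_smul, h.simple_smul_single_of_eq_three hij, smul_add]
    exact add_nonneg (ih _ hvn hvi rfl) (ih _ hvn hvj rfl)
  have hxv := cs.length_mul_simple v i
  set x := v * s i with hx
  have hvx : v = x * s i := (cs.simple_mul_simple_cancel_right i).symm
  have hxj : ℓ x < ℓ (x * s j) := by
    have hxsj : x * s j = w * s i * s j * s i := by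
      have braid := cs.simple_braid_of_eq_three (i := j) (j := i) (by rwa [M.symmetric])
      simp only [mul_assoc] at braid
      simp only [hx, hv, mul_assoc, braid]
    have h1 := cs.length_mul_simple (w * s i) j
    have h2 := cs.length_mul_simple (w * s i * s j) i
    rw [hxsj]
    omega
  rw [hwv, hvx, mul_smul, mul_smul, h.simple_smul_simple_smul_single_of_eq_three hij]
  exact ih _ (by omega) hxj rfl

theorem nonpos_smul_single_of_length_mul_lt (h : cs.IsGeometricAction) {w : W} {i : B}
    (hwi : ℓ (w * s i) < ℓ w) : w • (Pi.single i 1 : B → ℤ) ≤ 0 := by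
  have := h.nonneg_smul_single_of_length_lt (w := w * s i) (i := i)
    (by rwa [cs.simple_mul_simple_cancel_right])
  rwa [mul_smul, h.simple_smul_single_self, smul_neg, neg_nonneg] at this

theorem nonneg_smul_single_iff (h : cs.IsGeometricAction) {w : W} {i : B} :
    0 ≤ w • (Pi.single i 1 : B → ℤ) ↔ ¬cs.IsRightDescent w i := by
  refine ⟨fun hw hd => ?_, fun hd => h.nonneg_smul_single_of_length_lt ?_⟩
  · exact ne_zero_of_mem_roots (smul_mem_roots w (single_mem_roots i))
      (le_antisymm (h.nonpos_smul_single_of_length_mul_lt hd) hw)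
  · rw [not_isRightDescent_iff] at hd
    omega

theorem nonneg_or_nonpos_of_mem_roots (h : cs.IsGeometricAction) {β : B → ℤ}
    (hβ : β ∈ roots W) : 0 ≤ β ∨ β ≤ 0 := by
  obtain ⟨i, w, rfl⟩ := Set.mem_iUnion.mp hβ
  by_cases hd : cs.IsRightDescent w i
  · exact Or.inr (h.nonpos_smul_single_of_length_mul_lt hd)
  · exact Or.inl (h.nonneg_smul_single_iff.mpr hd)

theorem simple_smul_nonneg (h : cs.IsGeometricAction) {i : B} {β : B → ℤ} (hβ : β ∈ roots W)
    (hβ0 : 0 ≤ β) (hβi : β ≠ Pi.single i 1) : 0 ≤ s i • β := by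
  refine (h.nonneg_or_nonpos_of_mem_roots (smul_mem_roots _ hβ)).resolve_right fun hneg => hβi ?_
  -- `sᵢ β ≤ 0` forces `β = c αᵢ`, and `c = 1` because `αⱼ = c (w⁻¹ αᵢ)` for some `w`, `j`.
  have hβc : β = β i • Pi.single i 1 := by
    ext k
    by_cases hk : k = i
    · simp [hk]
    · have := hneg k
      rw [h.simple_smul_apply_of_ne hk] at this
      simpa [hk] using le_antisymm this (hβ0 k)
  obtain ⟨j, w, hw⟩ := Set.mem_iUnion.mp hβ
  have hj : (Pi.single j 1 : B → ℤ) = β i • w⁻¹ • (Pi.single i 1 : B → ℤ) := by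
    rw [smul_comm, ← hβc, ← hw, inv_smul_smul]
  have hunit : β i * (w⁻¹ • (Pi.single i 1 : B → ℤ)) j = 1 := by
    simpa using (congrFun hj j).symm
  rcases Int.eq_one_or_neg_one_of_mul_eq_one hunit with h1 | h1
  · rw [hβc, h1, one_smul]
  · exact absurd (hβ0 i) (by simp [h1])

theorem eq_of_forall_nonneg_smul_iff (h : cs.IsGeometricAction) {x y : W}
    (hxy : ∀ β : B → ℤ, β ∈ roots W → 0 ≤ β → (0 ≤ x • β ↔ 0 ≤ y • β)) : x = y := by
  induction hn : ℓ x using Nat.strong_induction_on generalizing x y with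
  | _ n ih =>
  have hsimple := fun j : B => hxy (Pi.single j 1) (single_mem_roots j) (by simp)
  simp only [h.nonneg_smul_single_iff, not_iff_not] at hsimple
  obtain rfl | hx := eq_or_ne x 1
  · by_contra hy
    obtain ⟨j, hj⟩ := cs.exists_rightDescent_of_ne_one (Ne.symm hy)
    exact cs.not_isRightDescent_one j ((hsimple j).mpr hj)
  obtain ⟨j, hj⟩ := cs.exists_rightDescent_of_ne_one hx
  refine mul_right_cancel (b := s j) (ih _ (hn ▸ hj) (fun β hβ hβ0 => ?_) rfl)
  by_cases hβj : β = Pi.single j 1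
  · subst hβj
    simp only [h.nonneg_smul_single_iff, ← isRightDescent_iff_not_isRightDescent_mul]
    exact iff_of_true hj ((hsimple j).mp hj)
  · rw [mul_smul, mul_smul]
    exact hxy _ (smul_mem_roots _ hβ) (h.simple_smul_nonneg hβ hβ0 hβj)

theorem eq_of_forall_smul_eq (h : cs.IsGeometricAction) {x y : W}
    (hxy : ∀ v : B → ℤ, x • v = y • v) : x = y :=
  h.eq_of_forall_nonneg_smul_iff fun β _ _ => by rw [hxy]

theorem smul_apply_of_mem_closure (h : cs.IsGeometricAction) {J : Set B} {x : W}
    (hx : x ∈ Subgroup.closure (cs.simple '' J)) {k : B} (hk : k ∉ J) (v : B → ℤ) :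
    (x • v) k = v k := by
  induction hx using Subgroup.closure_induction generalizing v with
  | mem _ hg =>
    obtain ⟨i, hi, rfl⟩ := hg
    exact h.simple_smul_apply_of_ne (ne_of_mem_of_not_mem hi hk).symm v
  | one => simp
  | mul a b _ _ ha hb => rw [mul_smul, ha, hb]
  | inv a _ ha => rw [← ha (a⁻¹ • v), smul_inv_smul]

theorem smul_nonpos_of_isRightDescent (h : cs.IsGeometricAction) {J : Set B} {x : W}
    (hx : ∀ j ∈ J, cs.IsRightDescent x j) {β : B → ℤ} (hβ : 0 ≤ β) (hβJ : ∀ k ∉ J, β k = 0) :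
    x • β ≤ 0 := by
  rw [← Finset.univ_sum_single β, Finset.smul_sum]
  refine Finset.sum_nonpos fun k _ => ?_
  by_cases hk : k ∈ J
  · rw [← mul_one (β k), ← smul_eq_mul, Pi.single_smul', smul_comm]
    exact smul_nonpos_of_nonneg_of_nonpos (hβ k) (h.nonpos_smul_single_of_length_mul_lt (hx k hk))
  · simp [hβJ k hk]

theorem nonneg_smul_iff_exists_ne_zero (h : cs.IsGeometricAction) {J : Set B} {x : W}
    (hxJ : x ∈ Subgroup.closure (cs.simple '' J)) (hx : ∀ j ∈ J, cs.IsRightDescent x j)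
    {β : B → ℤ} (hβ : β ∈ roots W) (hβ0 : 0 ≤ β) : 0 ≤ x • β ↔ ∃ k ∉ J, β k ≠ 0 := by
  constructor
  · intro hpos
    by_contra! hβJ
    exact ne_zero_of_mem_roots (smul_mem_roots x hβ)
      (le_antisymm (h.smul_nonpos_of_isRightDescent hx hβ0 hβJ) hpos)
  · rintro ⟨k, hk, hβk⟩
    refine (h.nonneg_or_nonpos_of_mem_roots (smul_mem_roots x hβ)).resolve_right fun hneg => hβk ?_
    have := hneg k
    rw [h.smul_apply_of_mem_closure hxJ hk] at this
    exact le_antisymm this (hβ0 k)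

theorem eq_of_forall_isRightDescent (h : cs.IsGeometricAction) {J : Set B} {x y : W}
    (hxJ : x ∈ Subgroup.closure (cs.simple '' J)) (hyJ : y ∈ Subgroup.closure (cs.simple '' J))
    (hx : ∀ j ∈ J, cs.IsRightDescent x j) (hy : ∀ j ∈ J, cs.IsRightDescent y j) : x = y :=
  h.eq_of_forall_nonneg_smul_iff fun _ hβ hβ0 => by
    rw [h.nonneg_smul_iff_exists_ne_zero hxJ hx hβ hβ0,
      h.nonneg_smul_iff_exists_ne_zero hyJ hy hβ hβ0]

end IsGeometricAction
end CoxeterSystem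

namespace CoxeterMatrix

open CoxeterSystem

local prefix:100 "π " => E₆.toCoxeterSystem.wordProd

theorem E₆_isSimplyLaced : E₆.IsSimplyLaced := by
  have : ∀ p : Fin 6 × Fin 6, p.1 ≠ p.2 → E₆ p.1 p.2 = 2 ∨ E₆ p.1 p.2 = 3 := by decide
  exact fun i j => this (i, j)

theorem E₆_isLiftable_geometricReflection : E₆.IsLiftable E₆.geometricReflection := by
  unfold IsLiftable
  decide

noncomputable def E₆.geometricRepresentation : E₆.Group →* Matrix (Fin 6) (Fin 6) ℤ :=
  E₆.toCoxeterSystem.lift ⟨E₆.geometricReflection, E₆_isLiftable_geometricReflection⟩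

noncomputable instance : DistribMulAction E₆.Group (Fin 6 → ℤ) where
  smul w v := E₆.geometricRepresentation w *ᵥ v
  one_smul v := by
    change E₆.geometricRepresentation 1 *ᵥ v = v
    simp
  mul_smul a b v := by
    change E₆.geometricRepresentation (a * b) *ᵥ v =
      E₆.geometricRepresentation a *ᵥ (E₆.geometricRepresentation b *ᵥ v)
    simp [mulVec_mulVec]
  smul_zero w := mulVec_zero _
  smul_add w := mulVec_add _

theorem E₆_smul_def (w : E₆.Group) (v : Fin 6 → ℤ) : w • v = E₆.geometricRepresentation w *ᵥ v :=
  rfl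

theorem E₆_isGeometricAction : E₆.toCoxeterSystem.IsGeometricAction where
  isSimplyLaced := E₆_isSimplyLaced
  simple_smul i v := by
    rw [E₆_smul_def, E₆.geometricRepresentation, lift_apply_simple, geometricReflection, sub_mulVec,
      one_mulVec, vecMulVec_mulVec, op_smul_eq_smul]

theorem E₆_wordProd_smul (ω : List (Fin 6)) (v : Fin 6 → ℤ) :
    π ω • v = (ω.map E₆.geometricReflection).prod *ᵥ v := by
  rw [E₆_smul_def, wordProd, map_list_prod, List.map_map]
  congr 3
  funext i
  exact lift_apply_simple _ _ i

theorem E₆_wordProd_eq_of_prod_eq {ω ω' : List (Fin 6)}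
    (h : (ω.map E₆.geometricReflection).prod = (ω'.map E₆.geometricReflection).prod) :
    π ω = π ω' :=
  E₆_isGeometricAction.eq_of_forall_smul_eq fun v => by rw [E₆_wordProd_smul, E₆_wordProd_smul, h]

def E₆.longestWord : List (Fin 6) :=
  [0, 1, 2, 0, 3, 1, 2, 0, 3, 2, 4, 3, 1, 2, 0, 3, 2, 4, 3, 1, 5, 4, 3, 1, 2, 0, 3, 2, 4, 3, 1,
    5, 4, 3, 2, 0]

def E₆.parabolicLongestWord : List (Fin 6) := [0, 2, 0, 3, 2, 0, 4, 3, 2, 0, 5, 4, 3, 2, 0]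

def E₆.conjugatingWord : List (Fin 6) := [1, 3, 2, 0, 4, 3, 2, 5, 4, 3]

set_option maxRecDepth 10000 in
theorem E₆_isRightDescent_longestWord (i : Fin 6) :
    E₆.toCoxeterSystem.IsRightDescent (π E₆.longestWord) i := by
  rw [← not_not (a := IsRightDescent _ _ _), ← E₆_isGeometricAction.nonneg_smul_single_iff,
    E₆_wordProd_smul, Pi.le_def]
  revert i
  decide

theorem E₆_isRightDescent_parabolicLongestWord {j : Fin 6} (hj : j ∈ ({1}ᶜ : Set (Fin 6))) :
    E₆.toCoxeterSystem.IsRightDescent (π E₆.parabolicLongestWord) j := by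
  rw [← not_not (a := IsRightDescent _ _ _), ← E₆_isGeometricAction.nonneg_smul_single_iff,
    E₆_wordProd_smul, Pi.le_def]
  rw [Set.mem_compl_singleton_iff] at hj
  revert j
  decide

theorem E₆_wordProd_parabolicLongestWord_mem :
    π E₆.parabolicLongestWord ∈ Subgroup.closure (E₆.toCoxeterSystem.simple '' {1}ᶜ) := by
  refine list_prod_mem fun x hx => ?_
  obtain ⟨i, hi, rfl⟩ := List.mem_map.mp hx
  exact Subgroup.subset_closure ⟨i, (by decide : ∀ i ∈ E₆.parabolicLongestWord, i ≠ 1) i hi, rfl⟩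

theorem E₆_eq_wordProd_longestWord {w₀ : E₆.Group}
    (hw₀ : ∀ w, E₆.toCoxeterSystem.length w ≤ E₆.toCoxeterSystem.length w₀) :
    w₀ = π E₆.longestWord := by
  have hmem (w : E₆.Group) : w ∈ Subgroup.closure (E₆.toCoxeterSystem.simple '' Set.univ) := by
    rw [Set.image_univ, subgroup_closure_range_simple]
    exact Subgroup.mem_top w
  refine E₆_isGeometricAction.eq_of_forall_isRightDescent (hmem _) (hmem _)
    (fun i _ => ?_) (fun i _ => E₆_isRightDescent_longestWord i)
  exact isRightDescent_of_forall_length_le _ (S := ⊤) trivial (fun y _ => hw₀ y) trivial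

theorem E₆_eq_wordProd_parabolicLongestWord {u : E₆.Group}
    (hu : u ∈ Subgroup.closure (E₆.toCoxeterSystem.simple '' {1}ᶜ))
    (humax : ∀ v ∈ Subgroup.closure (E₆.toCoxeterSystem.simple '' {1}ᶜ),
      E₆.toCoxeterSystem.length v ≤ E₆.toCoxeterSystem.length u) :
    u = π E₆.parabolicLongestWord :=
  E₆_isGeometricAction.eq_of_forall_isRightDescent hu E₆_wordProd_parabolicLongestWord_mem
    (fun _ hj => isRightDescent_of_forall_length_le _ hu humax
      (Subgroup.subset_closure ⟨_, hj, rfl⟩))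
    (fun _ hj => E₆_isRightDescent_parabolicLongestWord hj)

theorem E₆_simple_image_compl_one :
    E₆.toCoxeterSystem.simple '' {1}ᶜ =
      {E₆.simple 0, E₆.simple 2, E₆.simple 3, E₆.simple 4, E₆.simple 5} := by
  rw [toCoxeterSystem_simple,
    show ({1}ᶜ : Set (Fin 6)) = {0, 2, 3, 4, 5} by ext k; fin_cases k <;> simp]
  simp [Set.image_insert_eq]

set_option maxRecDepth 10000 in
theorem E₆_commute_simple_one_longestWord : Commute (E₆.simple 1) (π E₆.longestWord) := by
  have := E₆_wordProd_eq_of_prod_eq (ω := [1] ++ E₆.longestWord) (ω' := E₆.longestWord ++ [1])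
    (by decide)
  rwa [wordProd_append, wordProd_append, wordProd_singleton, toCoxeterSystem_simple] at this

set_option maxRecDepth 10000 in
theorem E₆_commute_parabolicLongestWord_longestWord :
    Commute (π E₆.parabolicLongestWord) (π E₆.longestWord) := by
  have := E₆_wordProd_eq_of_prod_eq (ω := E₆.parabolicLongestWord ++ E₆.longestWord)
    (ω' := E₆.longestWord ++ E₆.parabolicLongestWord) (by decide)
  rwa [wordProd_append, wordProd_append] at this

set_option maxRecDepth 10000 in
theorem E₆_commute_conjugatingWord_longestWord :
    Commute (π E₆.conjugatingWord) (π E₆.longestWord) := by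
  have := E₆_wordProd_eq_of_prod_eq (ω := E₆.conjugatingWord ++ E₆.longestWord)
    (ω' := E₆.longestWord ++ E₆.conjugatingWord) (by decide)
  rwa [wordProd_append, wordProd_append] at this

set_option maxRecDepth 10000 in
theorem E₆_conjugatingWord_mul_longestWord_mul_simple_one :
    π E₆.conjugatingWord * (π E₆.longestWord * E₆.simple 1) =
      π E₆.parabolicLongestWord * π E₆.conjugatingWord := by
  have := E₆_wordProd_eq_of_prod_eq (ω := E₆.conjugatingWord ++ (E₆.longestWord ++ [1]))
    (ω' := E₆.parabolicLongestWord ++ E₆.conjugatingWord) (by decide)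
  rwa [wordProd_append, wordProd_append, wordProd_append, wordProd_singleton,
    toCoxeterSystem_simple] at this

end CoxeterMatrix

/-- In the Coxeter group `W` of type `E₆` (with simple reflections `s₁, …, s₆` in Bourbaki
numbering, here 0-indexed as `s 0, …, s 5`), let `Z` be the centralizer of `w₀` in `W`,
and let `u` be an element of the parabolic subgroup `P` generated by
`s₁, s₃, s₄, s₅, s₆` whose length is maximal among the lengths of elements of `P`.
Then `s₂ ∈ Z`, `u ∈ Z`, and `w₀ · s₂` is conjugate to `u` by an element of `Z`, where
`w₀` is an element of maximal Coxeter length in `W`. -/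
theorem stmt18 (w₀ : CoxeterMatrix.E₆.Group)
    (hw₀ : ∀ w : CoxeterMatrix.E₆.Group,
      CoxeterMatrix.E₆.toCoxeterSystem.length w ≤ CoxeterMatrix.E₆.toCoxeterSystem.length w₀)
    (u : CoxeterMatrix.E₆.Group)
    (hu : u ∈ Subgroup.closure {CoxeterMatrix.E₆.simple 0, CoxeterMatrix.E₆.simple 2,
      CoxeterMatrix.E₆.simple 3, CoxeterMatrix.E₆.simple 4, CoxeterMatrix.E₆.simple 5})
    (humax : ∀ v ∈ Subgroup.closure {CoxeterMatrix.E₆.simple 0, CoxeterMatrix.E₆.simple 2,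
        CoxeterMatrix.E₆.simple 3, CoxeterMatrix.E₆.simple 4, CoxeterMatrix.E₆.simple 5},
      CoxeterMatrix.E₆.toCoxeterSystem.length v ≤ CoxeterMatrix.E₆.toCoxeterSystem.length u) :
    CoxeterMatrix.E₆.simple 1 ∈ Subgroup.centralizer {w₀} ∧
    u ∈ Subgroup.centralizer {w₀} ∧
    ∃ g ∈ Subgroup.centralizer {w₀},
      g * (w₀ * CoxeterMatrix.E₆.simple 1) * g⁻¹ = u := by
  rw [← CoxeterMatrix.E₆_simple_image_compl_one] at hu humax
  obtain rfl := CoxeterMatrix.E₆_eq_wordProd_longestWord hw₀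
  obtain rfl := CoxeterMatrix.E₆_eq_wordProd_parabolicLongestWord hu humax
  simp only [Subgroup.mem_centralizer_singleton_iff, mul_inv_eq_iff_eq_mul]
  exact ⟨CoxeterMatrix.E₆_commute_simple_one_longestWord,
    CoxeterMatrix.E₆_commute_parabolicLongestWord_longestWord, _,
    CoxeterMatrix.E₆_commute_conjugatingWord_longestWord,
    CoxeterMatrix.E₆_conjugatingWord_mul_longestWord_mul_simple_one⟩
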